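/- Under the mean-parameterized hierarchy A | M ~ IW_p(M, m) with M ~ W_p(Σ, ν), for two such matrices A_u, A_v that are identical when their latent mean matrices coincide and conditionally independent otherwise, if p = 3 and Σ = I_3 then the non-spatial variogram term equals γ(m, ν, I) = 12(m + ν - 4)(2m - 7) / (ν (m - 3)(m - 6)), valid for m > 6 and ν > 3. -/
import Mathlib


open Matrix

/-- For `p = 3` and `Σ = I`, the non-spatial variogram term of the hierarchy
`A | M ~ IW_p(M, m)`, `M ~ W_p(Σ, ν)` equals
`γ(m, ν, I) = 12(m + ν - 4)(2m - 7) / (ν (m - 3)(m - 6))`, for `m > 6`, `ν > 3`.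
Here `γ = 2(σ - λ)` with `σ = Tr E[A A]` computed from the moment formulas and
`λ = Tr(Σ Σ)`. -/
theorem nonspatial_variogram_identity (m ν : ℝ) (hm : 6 < m) (hν : 3 < ν) :
    let p : ℝ := 3
    let c2 : ℝ := 1 / ((m - p) * (m - p - 1) * (m - p - 3))
    let c1 : ℝ := (m - p - 2) * c2
    let Sig : Matrix (Fin 3) (Fin 3) ℝ := 1
    let EMM : Matrix (Fin 3) (Fin 3) ℝ :=
      ((ν + 1) / ν) • (Sig * Sig) + (ν⁻¹ * Sig.trace) • Sig
    let ETrMM : Matrix (Fin 3) (Fin 3) ℝ :=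
      (2 / ν) • (Sig * Sig) + Sig.trace • Sig
    let EAA : Matrix (Fin 3) (Fin 3) ℝ :=
      ((c1 + c2) * (m - p - 1) ^ 2) • EMM + (c2 * (m - p - 1) ^ 2) • ETrMM
    let σ' : ℝ := EAA.trace
    let lam : ℝ := (Sig * Sig).trace
    2 * (σ' - lam) = 12 * (m + ν - 4) * (2 * m - 7) / (ν * (m - 3) * (m - 6)) := by
  have h1 : m - 3 ≠ 0 := by linarith
  have h2 : m - 3 - 1 ≠ 0 := by linarith
  have h3 : m - 3 - 3 ≠ 0 := by linarith
  have h5 : m - 6 ≠ 0 := by linarith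
  have h4 : ν ≠ 0 := by linarith
  simp only [Matrix.one_mul, Matrix.trace_add, Matrix.trace_smul, Matrix.trace_one,
    Fintype.card_fin, smul_eq_mul]
  push_cast
  field_simp
  ring
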